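/- arXiv:math-ph/0506044 — 6 statements merged into one kernel-verified Lean document; each statement's English description precedes it below -/
import Mathlib

section
/- For all smooth functions X, φ, ψ : ℝ → ℝ, the Grozman operator G(φ, ψ) := 2·(φ·ψ''' − φ'''·ψ) + 3·(φ'·ψ'' − φ''·ψ') satisfies L_X^{5/3}(G(φ, ψ)) = G(L_X^{−2/3} φ, ψ) + G(φ, L_X^{−2/3} ψ). (That is, the third-order bilinear operator F_{−2/3} ⊗ F_{−2/3} → F_{5/3} is invariant under the action of vector fields on tensor densities.) -/
private lemma sm_deriv {f : ℝ → ℝ} (hf : ContDiff ℝ ((⊤:ℕ∞):WithTop ℕ∞) f) :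
    ContDiff ℝ ((⊤:ℕ∞):WithTop ℕ∞) (deriv f) := (contDiff_infty_iff_deriv.mp hf).2

private lemma deriv_fun_add' {f g : ℝ → ℝ} (hf : Differentiable ℝ f) (hg : Differentiable ℝ g) :
    deriv (fun y => f y + g y) = fun y => deriv f y + deriv g y :=
  funext fun x => deriv_fun_add (hf x) (hg x)

private lemma deriv_fun_sub' {f g : ℝ → ℝ} (hf : Differentiable ℝ f) (hg : Differentiable ℝ g) :
    deriv (fun y => f y - g y) = fun y => deriv f y - deriv g y :=
  funext fun x => deriv_fun_sub (hf x) (hg x)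

private lemma deriv_fun_mul' {f g : ℝ → ℝ} (hf : Differentiable ℝ f) (hg : Differentiable ℝ g) :
    deriv (fun y => f y * g y) = fun y => deriv f y * g y + f y * deriv g y :=
  funext fun x => deriv_fun_mul (hf x) (hg x)

private lemma deriv_fun_const_mul (c : ℝ) {f : ℝ → ℝ} (hf : Differentiable ℝ f) :
    deriv (fun y => c * f y) = fun y => c * deriv f y :=
  funext fun x => deriv_const_mul c (hf x)

private lemma id3 (f : ℝ → ℝ) : iteratedDeriv 3 f = deriv (deriv (deriv f)) := by
  simp [iteratedDeriv_succ, iteratedDeriv_zero]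
private lemma id2 (f : ℝ → ℝ) : iteratedDeriv 2 f = deriv (deriv f) := by
  simp [iteratedDeriv_succ, iteratedDeriv_zero]
private lemma id1 (f : ℝ → ℝ) : iteratedDeriv 1 f = deriv f := by
  simp [iteratedDeriv_succ, iteratedDeriv_zero]


/-- Lie derivative of a `lam`-density `φ` along the vector field `X`:
`L_X^lam φ = X·φ' + lam·X'·φ`. -/
noncomputable def lieDeriv (lam : ℝ) (X φ : ℝ → ℝ) : ℝ → ℝ :=
  fun x => X x * deriv φ x + lam * deriv X x * φ x

/-- The Grozman operator `G : F_{-2/3} ⊗ F_{-2/3} → F_{5/3}`,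
`G(φ,ψ) = 2(φ·ψ''' − φ'''·ψ) + 3(φ'·ψ'' − φ''·ψ')`. -/
noncomputable def grozman (φ ψ : ℝ → ℝ) : ℝ → ℝ :=
  fun x => 2 * (φ x * iteratedDeriv 3 ψ x - iteratedDeriv 3 φ x * ψ x)
    + 3 * (iteratedDeriv 1 φ x * iteratedDeriv 2 ψ x - iteratedDeriv 2 φ x * iteratedDeriv 1 ψ x)

/-- The Grozman operator `F_{-2/3} ⊗ F_{-2/3} → F_{5/3}` is invariant under the action of
vector fields on tensor densities. -/
theorem grozman_invariant (X φ ψ : ℝ → ℝ)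
    (hX : ContDiff ℝ (⊤ : ℕ∞) X) (hφ : ContDiff ℝ (⊤ : ℕ∞) φ) (hψ : ContDiff ℝ (⊤ : ℕ∞) ψ) :
    lieDeriv (5/3) X (grozman φ ψ)
      = fun x => grozman (lieDeriv (-2/3) X φ) ψ x + grozman φ (lieDeriv (-2/3) X ψ) x := by
  have hX0 : ContDiff ℝ ((⊤:ℕ∞):WithTop ℕ∞) X := hX.of_le (by simp)
  have hφ0 : ContDiff ℝ ((⊤:ℕ∞):WithTop ℕ∞) φ := hφ.of_le (by simp)
  have hψ0 : ContDiff ℝ ((⊤:ℕ∞):WithTop ℕ∞) ψ := hψ.of_le (by simp)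
  have dX0 : Differentiable ℝ X := hX0.differentiable (by norm_num)
  have dX1 : Differentiable ℝ (deriv X) := (sm_deriv hX0).differentiable (by norm_num)
  have dX2 : Differentiable ℝ (deriv (deriv X)) :=
    (sm_deriv (sm_deriv hX0)).differentiable (by norm_num)
  have dX3 : Differentiable ℝ (deriv (deriv (deriv X))) :=
    (sm_deriv (sm_deriv (sm_deriv hX0))).differentiable (by norm_num)
  have dX4 : Differentiable ℝ (deriv (deriv (deriv (deriv X)))) :=
    (sm_deriv (sm_deriv (sm_deriv (sm_deriv hX0)))).differentiable (by norm_num)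
  have dφ0 : Differentiable ℝ φ := hφ0.differentiable (by norm_num)
  have dφ1 : Differentiable ℝ (deriv φ) := (sm_deriv hφ0).differentiable (by norm_num)
  have dφ2 : Differentiable ℝ (deriv (deriv φ)) :=
    (sm_deriv (sm_deriv hφ0)).differentiable (by norm_num)
  have dφ3 : Differentiable ℝ (deriv (deriv (deriv φ))) :=
    (sm_deriv (sm_deriv (sm_deriv hφ0))).differentiable (by norm_num)
  have dφ4 : Differentiable ℝ (deriv (deriv (deriv (deriv φ)))) :=
    (sm_deriv (sm_deriv (sm_deriv (sm_deriv hφ0)))).differentiable (by norm_num)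
  have dψ0 : Differentiable ℝ ψ := hψ0.differentiable (by norm_num)
  have dψ1 : Differentiable ℝ (deriv ψ) := (sm_deriv hψ0).differentiable (by norm_num)
  have dψ2 : Differentiable ℝ (deriv (deriv ψ)) :=
    (sm_deriv (sm_deriv hψ0)).differentiable (by norm_num)
  have dψ3 : Differentiable ℝ (deriv (deriv (deriv ψ))) :=
    (sm_deriv (sm_deriv (sm_deriv hψ0))).differentiable (by norm_num)
  have dψ4 : Differentiable ℝ (deriv (deriv (deriv (deriv ψ)))) :=
    (sm_deriv (sm_deriv (sm_deriv (sm_deriv hψ0)))).differentiable (by norm_num)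
  funext x
  have el : ∀ (c : ℝ) (f g : ℝ → ℝ), lieDeriv c f g
      = fun x => f x * deriv g x + c * deriv f x * g x := fun _ _ _ => rfl
  have eg : ∀ f g : ℝ → ℝ, grozman f g
      = fun x => 2 * (f x * iteratedDeriv 3 g x - iteratedDeriv 3 f x * g x)
        + 3 * (iteratedDeriv 1 f x * iteratedDeriv 2 g x
            - iteratedDeriv 2 f x * iteratedDeriv 1 g x) := fun _ _ => rfl
  simp only [el, eg, id3, id2, id1]
  simp (disch := fun_prop) only [deriv_fun_add', deriv_fun_sub', deriv_fun_mul',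
    deriv_fun_const_mul, deriv_const', zero_mul, mul_zero, add_zero, zero_add]
  ring
end

section
/- Let λ, μ ∈ ℝ, let k ∈ ℕ, let X : ℝ → ℝ be smooth, and let a_0, …, a_k : ℝ → ℝ be smooth (set a_j := 0 for j > k). Define for each i ∈ {0, …, k} the smooth function b_i := X·a_i' + (μ − λ − i)·X'·a_i − Σ_{j=i+1}^{k} (binom(j, i−1) + λ·binom(j, i))·a_j·X^{(j−i+1)}, where X^{(m)} is the m-th iterated derivative and binom(j, i−1) := 0 when i = 0. Then for every smooth φ : ℝ → ℝ one has Σ_{i=0}^{k} b_i·φ^{(i)} = L_X^μ( Σ_{i=0}^{k} a_i·φ^{(i)} ) − Σ_{i=0}^{k} a_i·(L_X^λ φ)^{(i)}. (That is, the Lie derivative 𝓛_X^{λ,μ}(A) = L_X^μ ∘ A − A ∘ L_X^λ of a differential operator of order ≤ k is again a differential operator of order ≤ k, with the explicit coefficients b_i.) -/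
open Finset

lemma smooth_iter {f : ℝ → ℝ} (hf : ContDiff ℝ (⊤ : ℕ∞) f) (n : ℕ) :
    ContDiff ℝ (⊤ : ℕ∞) (iteratedDeriv n f) := by
  rw [iteratedDeriv_eq_iterate]; exact hf.iterate_deriv n

lemma diff_iter {f : ℝ → ℝ} (hf : ContDiff ℝ (⊤ : ℕ∞) f) (n : ℕ) (x : ℝ) :
    DifferentiableAt ℝ (iteratedDeriv n f) x :=
  ((smooth_iter hf n).differentiable (by simp)).differentiableAt

-- binomial convolution step
lemma conv_step (F G : ℕ → ℝ) (n : ℕ) :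
    ∑ m ∈ range (n+1), (n.choose m : ℝ) * (F (m+1) * G (n-m) + F m * G (n-m+1))
      = ∑ m ∈ range (n+2), ((n+1).choose m : ℝ) * F m * G (n+1-m) := by
  have key : ∑ m ∈ range (n+2), ((n+1).choose m : ℝ) * F m * G (n+1-m)
      = (∑ m ∈ range (n+1), ((n.choose m : ℝ) * F (m+1) * G (n-m)
          + (n.choose (m+1) : ℝ) * F (m+1) * G (n-m))) + F 0 * G (n+1) := by
    rw [Finset.sum_range_succ']
    congr 1
    · apply Finset.sum_congr rfl; intro m hm
      rw [Nat.succ_sub_succ, Nat.choose_succ_succ]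
      push_cast; ring
    · simp
  have key2 : ∑ m ∈ range (n+1), (n.choose m : ℝ) * F m * G (n+1-m)
      = ∑ m ∈ range (n+1), (n.choose (m+1) : ℝ) * F (m+1) * G (n-m) + F 0 * G (n+1) := by
    have h := Finset.sum_range_succ' (fun m => (n.choose m : ℝ) * F m * G (n+1-m)) (n+1)
    rw [Finset.sum_range_succ _ (n+1)] at h
    simp only [Nat.choose_succ_self, Nat.cast_zero, zero_mul, add_zero, Nat.succ_sub_succ,
      Nat.sub_zero, Nat.choose_zero_right, Nat.cast_one, one_mul] at h
    exact h
  rw [key, Finset.sum_add_distrib, add_assoc, ← key2]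
  have : ∀ m ∈ range (n+1), (n.choose m : ℝ) * (F (m+1) * G (n-m) + F m * G (n-m+1))
      = (n.choose m : ℝ) * F (m+1) * G (n-m) + (n.choose m : ℝ) * F m * G (n+1-m) := by
    intro m hm
    simp only [mem_range] at hm
    have : n - m + 1 = n + 1 - m := by omega
    rw [this]; ring
  rw [Finset.sum_congr rfl this, Finset.sum_add_distrib]

theorem leibniz (f g : ℝ → ℝ) (hf : ContDiff ℝ (⊤ : ℕ∞) f) (hg : ContDiff ℝ (⊤ : ℕ∞) g) (n : ℕ) :
    iteratedDeriv n (fun x => f x * g x)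
      = fun x => ∑ m ∈ range (n+1), (n.choose m : ℝ) * iteratedDeriv m f x * iteratedDeriv (n-m) g x := by
  induction n with
  | zero => simp
  | succ n ih =>
    funext x
    rw [iteratedDeriv_succ, ih]
    rw [deriv_fun_sum (fun m hm => by
      exact (((diff_iter hf m x).const_mul _).mul (diff_iter hg (n-m) x)))]
    have h1 : ∀ m ∈ range (n+1),
        deriv (fun y => (n.choose m : ℝ) * iteratedDeriv m f y * iteratedDeriv (n-m) g y) x
        = (n.choose m : ℝ) * (iteratedDeriv (m+1) f x * iteratedDeriv (n-m) g x
            + iteratedDeriv m f x * iteratedDeriv (n-m+1) g x) := by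
      intro m hm
      rw [deriv_fun_mul ((diff_iter hf m x).const_mul _) (diff_iter hg (n-m) x),
        deriv_const_mul _ (diff_iter hf m x)]
      rw [show deriv (iteratedDeriv m f) x = iteratedDeriv (m+1) f x from by
            rw [iteratedDeriv_succ],
          show deriv (iteratedDeriv (n-m) g) x = iteratedDeriv (n-m+1) g x from by
            rw [iteratedDeriv_succ]]
      ring
    exact (Finset.sum_congr rfl h1).trans
      (conv_step (fun m => iteratedDeriv m f x) (fun m => iteratedDeriv m g x) n)

-- per-j inner reindexing lemma
lemma inner_reindex (lam : ℝ) (Xd P : ℕ → ℝ) (j : ℕ) :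
    ∑ i ∈ range j, ((if i = 0 then (0:ℝ) else (j.choose (i-1) : ℝ)) + lam * (j.choose i : ℝ))
        * Xd (j-i+1) * P i
    = (∑ m ∈ range (j+1), (j.choose m : ℝ) * Xd m * P (j-m+1)
        - (Xd 0 * P (j+1) + (j:ℝ) * Xd 1 * P j))
      + lam * (∑ m ∈ range (j+1), (j.choose m : ℝ) * Xd (m+1) * P (j-m) - Xd 1 * P j) := by
  have split : ∀ i ∈ range j,
      ((if i = 0 then (0:ℝ) else (j.choose (i-1) : ℝ)) + lam * (j.choose i : ℝ)) * Xd (j-i+1) * P i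
      = (if i = 0 then (0:ℝ) else (j.choose (i-1) : ℝ)) * Xd (j-i+1) * P i
        + lam * ((j.choose i : ℝ) * Xd (j-i+1) * P i) := by
    intro i _; ring
  rw [Finset.sum_congr rfl split, Finset.sum_add_distrib, ← Finset.mul_sum]
  have part2 : ∑ i ∈ range j, (j.choose i : ℝ) * Xd (j-i+1) * P i
      = ∑ m ∈ range (j+1), (j.choose m : ℝ) * Xd (m+1) * P (j-m) - Xd 1 * P j := by
    rw [Finset.sum_range_succ' (fun m => (j.choose m : ℝ) * Xd (m+1) * P (j-m)) j]
    simp only [Nat.choose_zero_right, Nat.cast_one, one_mul, Nat.sub_zero]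
    rw [← Finset.sum_range_reflect (fun i => (j.choose i : ℝ) * Xd (j-i+1) * P i) j]
    have : ∀ i ∈ range j, (j.choose (j-1-i) : ℝ) * Xd (j-(j-1-i)+1) * P (j-1-i)
        = (j.choose (i+1) : ℝ) * Xd (i+1+1) * P (j-(i+1)) := by
      intro i hi
      simp only [mem_range] at hi
      have e1 : j - 1 - i = j - (i+1) := by omega
      have e2 : j - (j-1-i) + 1 = i + 1 + 1 := by omega
      have e3 : j.choose (j - (i+1)) = j.choose (i+1) := Nat.choose_symm (by omega)
      rw [e2, e1, e3]
    rw [Finset.sum_congr rfl this]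
    ring
  have part1 : ∑ i ∈ range j, (if i = 0 then (0:ℝ) else (j.choose (i-1) : ℝ)) * Xd (j-i+1) * P i
      = ∑ m ∈ range (j+1), (j.choose m : ℝ) * Xd m * P (j-m+1)
        - (Xd 0 * P (j+1) + (j:ℝ) * Xd 1 * P j) := by
    match j with
    | 0 => simp
    | Nat.succ j' =>
      rw [Finset.sum_range_succ' (fun m => ((j'+1).choose m : ℝ) * Xd m * P (j'+1-m+1)) (j'+1)]
      rw [Finset.sum_range_succ' (fun m => ((j'+1).choose (m+1) : ℝ) * Xd (m+1) * P (j'+1-(m+1)+1)) j']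
      rw [Finset.sum_range_succ'
        (fun i => (if i = 0 then (0:ℝ) else ((j'+1).choose (i-1) : ℝ)) * Xd (j'+1-i+1) * P i) j']
      simp only [if_pos rfl, zero_mul, add_zero, if_neg (Nat.succ_ne_zero _)]
      have e0 : ∀ i ∈ range j', ((j'+1).choose (i+1-1) : ℝ) * Xd (j'+1-(i+1)+1) * P (i+1)
          = ((j'+1).choose i : ℝ) * Xd (j'-i+1) * P (i+1) := by
        intro i hi
        have : i + 1 - 1 = i := by omega
        have e : j'+1-(i+1)+1 = j'-i+1 := by omega
        rw [this, e]
      rw [Finset.sum_congr rfl e0]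
      rw [← Finset.sum_range_reflect (fun i => ((j'+1).choose i : ℝ) * Xd (j'-i+1) * P (i+1)) j']
      have e1 : ∀ i ∈ range j',
          ((j'+1).choose (j'-1-i) : ℝ) * Xd (j'-(j'-1-i)+1) * P (j'-1-i+1)
          = ((j'+1).choose (i+1+1) : ℝ) * Xd (i+1+1) * P (j'+1-(i+1+1)+1) := by
        intro i hi
        simp only [mem_range] at hi
        have e2 : j' - (j'-1-i) + 1 = i + 1 + 1 := by omega
        have e3 : j' - 1 - i + 1 = j'+1-(i+1+1)+1 := by omega
        have e4 : (j'+1).choose (j'-1-i) = (j'+1).choose (i+1+1) := by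
          have : j' - 1 - i = (j'+1) - (i+1+1) := by omega
          rw [this]
          exact Nat.choose_symm (by omega)
        rw [e2, e3, e4]
      rw [Finset.sum_congr rfl e1]
      simp only [Nat.succ_eq_add_one, Nat.choose_zero_right, Nat.cast_one, one_mul,
        Nat.sub_zero, zero_add, Nat.choose_one_right]
      push_cast
      ring
  rw [part1, part2]

-- swap order of summation
lemma swap_sum (k : ℕ) (F : ℕ → ℕ → ℝ) :
    ∑ i ∈ range (k+1), ∑ j ∈ Icc (i+1) k, F i j
      = ∑ j ∈ range (k+1), ∑ i ∈ range j, F i j := by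
  apply Finset.sum_comm'
  intro i j
  simp only [mem_range, mem_Icc]
  omega

lemma core_identity (lam μ : ℝ) (k : ℕ) (A A' Xd P : ℕ → ℝ) :
    ∑ i ∈ range (k+1),
      (Xd 0 * A' i + (μ - lam - (i:ℝ)) * Xd 1 * A i
        - ∑ j ∈ Icc (i+1) k,
            ((if i = 0 then (0:ℝ) else (j.choose (i-1) : ℝ)) + lam * (j.choose i : ℝ))
              * A j * Xd (j-i+1)) * P i
    = (Xd 0 * (∑ i ∈ range (k+1), (A' i * P i + A i * P (i+1)))
        + μ * Xd 1 * ∑ i ∈ range (k+1), A i * P i)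
      - ∑ i ∈ range (k+1), A i *
          ((∑ m ∈ range (i+1), (i.choose m : ℝ) * Xd m * P (i-m+1))
            + lam * ∑ m ∈ range (i+1), (i.choose m : ℝ) * Xd (m+1) * P (i-m)) := by
  have step1 : ∀ i ∈ range (k+1),
      (Xd 0 * A' i + (μ - lam - (i:ℝ)) * Xd 1 * A i
        - ∑ j ∈ Icc (i+1) k,
            ((if i = 0 then (0:ℝ) else (j.choose (i-1) : ℝ)) + lam * (j.choose i : ℝ))
              * A j * Xd (j-i+1)) * P i
      = (Xd 0 * A' i + (μ - lam - (i:ℝ)) * Xd 1 * A i) * P i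
        - ∑ j ∈ Icc (i+1) k,
            ((if i = 0 then (0:ℝ) else (j.choose (i-1) : ℝ)) + lam * (j.choose i : ℝ))
              * A j * Xd (j-i+1) * P i := by
    intro i _
    rw [sub_mul, Finset.sum_mul]
  rw [Finset.sum_congr rfl step1, Finset.sum_sub_distrib]
  have hs : ∑ i ∈ range (k+1), ∑ j ∈ Icc (i+1) k,
        ((if i = 0 then (0:ℝ) else (j.choose (i-1) : ℝ)) + lam * (j.choose i : ℝ))
          * A j * Xd (j-i+1) * P i
      = ∑ j ∈ range (k+1), ∑ i ∈ range j,
        ((if i = 0 then (0:ℝ) else (j.choose (i-1) : ℝ)) + lam * (j.choose i : ℝ))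
          * A j * Xd (j-i+1) * P i := swap_sum _ _
  rw [hs]
  have hj : ∀ j ∈ range (k+1), ∑ i ∈ range j,
        ((if i = 0 then (0:ℝ) else (j.choose (i-1) : ℝ)) + lam * (j.choose i : ℝ))
          * A j * Xd (j-i+1) * P i
      = A j * (((∑ m ∈ range (j+1), (j.choose m : ℝ) * Xd m * P (j-m+1))
            + lam * ∑ m ∈ range (j+1), (j.choose m : ℝ) * Xd (m+1) * P (j-m))
          - ((Xd 0 * P (j+1) + (j:ℝ) * Xd 1 * P j) + lam * (Xd 1 * P j))) := by
    intro j _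
    have h := inner_reindex lam Xd P j
    have h2 : ∑ i ∈ range j,
        ((if i = 0 then (0:ℝ) else (j.choose (i-1) : ℝ)) + lam * (j.choose i : ℝ))
          * A j * Xd (j-i+1) * P i
        = A j * ∑ i ∈ range j,
        ((if i = 0 then (0:ℝ) else (j.choose (i-1) : ℝ)) + lam * (j.choose i : ℝ))
          * Xd (j-i+1) * P i := by
      rw [Finset.mul_sum]
      apply Finset.sum_congr rfl; intro i _; ring
    rw [h2, h]; ring
  rw [Finset.sum_congr rfl hj]
  have expand : ∀ j ∈ range (k+1),
      A j * (((∑ m ∈ range (j+1), (j.choose m : ℝ) * Xd m * P (j-m+1))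
            + lam * ∑ m ∈ range (j+1), (j.choose m : ℝ) * Xd (m+1) * P (j-m))
          - ((Xd 0 * P (j+1) + (j:ℝ) * Xd 1 * P j) + lam * (Xd 1 * P j)))
      = A j * ((∑ m ∈ range (j+1), (j.choose m : ℝ) * Xd m * P (j-m+1))
            + lam * ∑ m ∈ range (j+1), (j.choose m : ℝ) * Xd (m+1) * P (j-m))
        - A j * ((Xd 0 * P (j+1) + (j:ℝ) * Xd 1 * P j) + lam * (Xd 1 * P j)) := by
    intro j _; ring
  rw [Finset.sum_congr rfl expand, Finset.sum_sub_distrib]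
  have final : ∑ i ∈ range (k+1), (Xd 0 * A' i + (μ - lam - (i:ℝ)) * Xd 1 * A i) * P i
      + ∑ i ∈ range (k+1), A i * ((Xd 0 * P (i+1) + (i:ℝ) * Xd 1 * P i) + lam * (Xd 1 * P i))
      = Xd 0 * (∑ i ∈ range (k+1), (A' i * P i + A i * P (i+1)))
        + μ * Xd 1 * ∑ i ∈ range (k+1), A i * P i := by
    rw [Finset.mul_sum, Finset.mul_sum, ← Finset.sum_add_distrib, ← Finset.sum_add_distrib]
    apply Finset.sum_congr rfl; intro i _; ring
  linarith [final]

lemma cdOn {f : ℝ → ℝ} (hf : ContDiff ℝ (⊤:ℕ∞) f) (n : ℕ) : ContDiffOn ℝ n f Set.univ :=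
  (hf.of_le (by exact_mod_cast le_top)).contDiffOn


/-- The Lie derivative `𝓛_X^{λ,μ}(A) = L_X^μ ∘ A − A ∘ L_X^λ` of a differential operator
of order ≤ k is again a differential operator of order ≤ k, with the explicit coefficients
`b_i = X·a_i' + (μ−λ−i)·X'·a_i − Σ_{j=i+1}^k (binom(j,i−1) + λ·binom(j,i))·a_j·X^{(j−i+1)}`. -/
theorem lieDeriv_diffOp_coeffs (lam μ : ℝ) (k : ℕ) (X : ℝ → ℝ) (a : ℕ → ℝ → ℝ)
    (hX : ContDiff ℝ (⊤ : ℕ∞) X) (ha : ∀ i, ContDiff ℝ (⊤ : ℕ∞) (a i))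
    (ha' : ∀ j, j > k → a j = 0)
    (b : ℕ → ℝ → ℝ)
    (hb : ∀ i, i ≤ k → b i = fun x =>
      X x * deriv (a i) x + (μ - lam - (i : ℝ)) * deriv X x * a i x
        - ∑ j ∈ Finset.Icc (i+1) k,
            ((if i = 0 then (0:ℝ) else ((j.choose (i-1) : ℕ) : ℝ)) + lam * ((j.choose i : ℕ) : ℝ))
              * a j x * iteratedDeriv (j - i + 1) X x) :
    ∀ φ : ℝ → ℝ, ContDiff ℝ (⊤ : ℕ∞) φ →
      (fun x => ∑ i ∈ Finset.range (k+1), b i x * iteratedDeriv i φ x)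
        = fun x =>
            lieDeriv μ X (fun y => ∑ i ∈ Finset.range (k+1), a i y * iteratedDeriv i φ y) x
              - ∑ i ∈ Finset.range (k+1), a i x * iteratedDeriv i (lieDeriv lam X φ) x := by
  intro φ hφ
  have hX' : ContDiff ℝ (⊤:ℕ∞) X := hX.of_le (by simp)
  have hφ' : ContDiff ℝ (⊤:ℕ∞) φ := hφ.of_le (by simp)
  have ha'' : ∀ i, ContDiff ℝ (⊤:ℕ∞) (a i) := fun i => (ha i).of_le (by simp)
  have hdX : ContDiff ℝ (⊤:ℕ∞) (deriv X) := by
    have := smooth_iter hX' 1; rwa [iteratedDeriv_one] at this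
  have hdφ : ContDiff ℝ (⊤:ℕ∞) (deriv φ) := by
    have := smooth_iter hφ' 1; rwa [iteratedDeriv_one] at this
  funext x
  have hderivS : deriv (fun y => ∑ i ∈ Finset.range (k+1), a i y * iteratedDeriv i φ y) x
      = ∑ i ∈ Finset.range (k+1),
          (deriv (a i) x * iteratedDeriv i φ x + a i x * iteratedDeriv (i+1) φ x) := by
    rw [deriv_fun_sum (fun i _ =>
      (((ha'' i).differentiable (by simp)).differentiableAt).fun_mul
        (diff_iter hφ' i x))]
    apply Finset.sum_congr rfl; intro i _
    rw [deriv_fun_mul (((ha'' i).differentiable (by simp)).differentiableAt)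
      (diff_iter hφ' i x)]
    rw [show deriv (iteratedDeriv i φ) x = iteratedDeriv (i+1) φ x from by
      rw [iteratedDeriv_succ]]
  have hlie : ∀ i : ℕ, iteratedDeriv i (lieDeriv lam X φ) x
      = (∑ m ∈ Finset.range (i+1),
            (i.choose m : ℝ) * iteratedDeriv m X x * iteratedDeriv (i-m+1) φ x)
        + lam * ∑ m ∈ Finset.range (i+1),
            (i.choose m : ℝ) * iteratedDeriv (m+1) X x * iteratedDeriv (i-m) φ x := by
    intro i
    have hf1 : ContDiff ℝ (⊤:ℕ∞) (fun y => X y * deriv φ y) := hX'.mul hdφ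
    have hf2 : ContDiff ℝ (⊤:ℕ∞) (fun y => deriv X y * φ y) := hdX.mul hφ'
    have hadd : iteratedDeriv i (lieDeriv lam X φ) x
        = iteratedDeriv i (fun y => X y * deriv φ y) x
          + iteratedDeriv i (fun y => lam * (deriv X y * φ y)) x := by
      have heq : lieDeriv lam X φ
          = (fun y => X y * deriv φ y) + (fun y => lam * (deriv X y * φ y)) := by
        funext y; simp only [lieDeriv, Pi.add_apply]; ring
      rw [heq, ← iteratedDerivWithin_univ, ← iteratedDerivWithin_univ,
        ← iteratedDerivWithin_univ]
      exact iteratedDerivWithin_add (Set.mem_univ x) uniqueDiffOn_univ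
        (cdOn hf1 i x (Set.mem_univ x)) (cdOn (contDiff_const.mul hf2) i x (Set.mem_univ x))
    have hconst : iteratedDeriv i (fun y => lam * (deriv X y * φ y)) x
        = lam * iteratedDeriv i (fun y => deriv X y * φ y) x := by
      rw [← iteratedDerivWithin_univ, ← iteratedDerivWithin_univ]
      exact iteratedDerivWithin_const_mul (Set.mem_univ x) uniqueDiffOn_univ lam (cdOn hf2 i x (Set.mem_univ x))
    have hL1 : iteratedDeriv i (fun y => X y * deriv φ y) x
        = ∑ m ∈ Finset.range (i+1),
            (i.choose m : ℝ) * iteratedDeriv m X x * iteratedDeriv (i-m+1) φ x := by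
      rw [leibniz X (deriv φ) hX' hdφ i]
      apply Finset.sum_congr rfl; intro m _
      rw [show iteratedDeriv (i-m) (deriv φ) x = iteratedDeriv (i-m+1) φ x from by
        rw [iteratedDeriv_succ']]
    have hL2 : iteratedDeriv i (fun y => deriv X y * φ y) x
        = ∑ m ∈ Finset.range (i+1),
            (i.choose m : ℝ) * iteratedDeriv (m+1) X x * iteratedDeriv (i-m) φ x := by
      rw [leibniz (deriv X) φ hdX hφ' i]
      apply Finset.sum_congr rfl; intro m _
      rw [show iteratedDeriv m (deriv X) x = iteratedDeriv (m+1) X x from by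
        rw [iteratedDeriv_succ']]
    rw [hadd, hconst, hL1, hL2]
  have hcore := core_identity lam μ k (fun j => a j x) (fun j => deriv (a j) x)
    (fun m => iteratedDeriv m X x) (fun l => iteratedDeriv l φ x)
  simp only [iteratedDeriv_zero, iteratedDeriv_one] at hcore
  have hbsum : ∑ i ∈ Finset.range (k+1), b i x * iteratedDeriv i φ x
      = ∑ i ∈ Finset.range (k+1),
          (X x * deriv (a i) x + (μ - lam - (i : ℝ)) * deriv X x * a i x
            - ∑ j ∈ Finset.Icc (i+1) k,
                ((if i = 0 then (0:ℝ) else ((j.choose (i-1) : ℕ) : ℝ))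
                  + lam * ((j.choose i : ℕ) : ℝ))
                  * a j x * iteratedDeriv (j - i + 1) X x) * iteratedDeriv i φ x := by
    apply Finset.sum_congr rfl; intro i hi
    rw [hb i (by simpa [Nat.lt_succ_iff] using hi)]
  have hliesum : ∑ i ∈ Finset.range (k+1), a i x * iteratedDeriv i (lieDeriv lam X φ) x
      = ∑ i ∈ Finset.range (k+1), a i x *
          ((∑ m ∈ Finset.range (i+1),
              (i.choose m : ℝ) * iteratedDeriv m X x * iteratedDeriv (i-m+1) φ x)
            + lam * ∑ m ∈ Finset.range (i+1),
              (i.choose m : ℝ) * iteratedDeriv (m+1) X x * iteratedDeriv (i-m) φ x) := by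
    apply Finset.sum_congr rfl; intro i _
    rw [hlie i]
  rw [hbsum, hliesum]
  rw [show lieDeriv μ X (fun y => ∑ i ∈ Finset.range (k+1), a i y * iteratedDeriv i φ y) x
      = X x * deriv (fun y => ∑ i ∈ Finset.range (k+1), a i y * iteratedDeriv i φ y) x
        + μ * deriv X x * ∑ i ∈ Finset.range (k+1), a i x * iteratedDeriv i φ x from rfl]
  rw [hderivS]
  exact hcore
end

section
/- Let λ, μ ∈ ℝ, let k ∈ ℕ, let X, a_0, …, a_k : ℝ → ℝ be smooth, and let b_0, …, b_k : ℝ → ℝ be smooth functions such that Σ_{i=0}^{k} b_i·φ^{(i)} = L_X^μ( Σ_{i=0}^{k} a_i·φ^{(i)} ) − Σ_{i=0}^{k} a_i·(L_X^λ φ)^{(i)} for every smooth φ : ℝ → ℝ. Then b_k = X·a_k' + (μ − λ − k)·X'·a_k = L_X^{μ−λ−k}(a_k). (That is, the principal symbol map σ(A) = a_k, viewed as a density of weight μ − λ − k, is equivariant under the action of vector fields.) -/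
open Finset

open ContDiff in
lemma cd_nat {f : ℝ → ℝ} (h : ContDiff ℝ ∞ f) (n : ℕ) : ContDiff ℝ n f :=
  h.of_le (by exact_mod_cast le_top)

lemma itd_add {n : ℕ} {f g : ℝ → ℝ} (hf : ContDiff ℝ n f) (hg : ContDiff ℝ n g) (x : ℝ) :
    iteratedDeriv n (fun y => f y + g y) x = iteratedDeriv n f x + iteratedDeriv n g x := by
  simp only [← iteratedDerivWithin_univ]
  exact iteratedDerivWithin_fun_add (Set.mem_univ x) uniqueDiffOn_univ hf.contDiffWithinAt hg.contDiffWithinAt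

lemma itd_cmul {n : ℕ} {f : ℝ → ℝ} (hf : ContDiff ℝ n f) (c x : ℝ) :
    iteratedDeriv n (fun y => c * f y) x = c * iteratedDeriv n f x := by
  simp only [← iteratedDerivWithin_univ]
  exact iteratedDerivWithin_const_mul (Set.mem_univ x) uniqueDiffOn_univ c hf.contDiffWithinAt

lemma itd_pow (c : ℝ) (m i : ℕ) :
    iteratedDeriv i (fun y : ℝ => (y - c) ^ m)
      = fun y => (m.descFactorial i : ℝ) * (y - c) ^ (m - i) := by
  induction i with
  | zero => simp
  | succ i ih =>
    rw [iteratedDeriv_succ, ih]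
    funext y
    have h : HasDerivAt (fun y : ℝ => (m.descFactorial i : ℝ) * (y - c) ^ (m - i))
        ((m.descFactorial i : ℝ) * (((m - i : ℕ) : ℝ) * (y - c) ^ (m - i - 1) * 1)) y :=
      ((((hasDerivAt_id y).sub_const c).pow (m - i))).const_mul _
    rw [h.deriv, Nat.descFactorial_succ, Nat.cast_mul, Nat.sub_sub]
    ring

open ContDiff in
lemma itd_mul_step (c : ℝ) (f : ℝ → ℝ) (hf : ContDiff ℝ ∞ f) (m i : ℕ) :
    iteratedDeriv (i + 1) (fun y => f y * (y - c) ^ m) c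
      = iteratedDeriv i (fun y => deriv f y * (y - c) ^ m) c
        + (m : ℝ) * iteratedDeriv i (fun y => f y * (y - c) ^ (m - 1)) c := by
  have hf' : ContDiff ℝ ∞ (deriv f) := (contDiff_infty_iff_deriv.mp hf).2
  have hpow : ∀ l : ℕ, ContDiff ℝ ∞ (fun y : ℝ => (y - c) ^ l) := fun l =>
    (contDiff_id.sub contDiff_const).pow l
  rw [iteratedDeriv_succ']
  have hderiv : deriv (fun y => f y * (y - c) ^ m)
      = fun y => deriv f y * (y - c) ^ m + (m : ℝ) * (f y * (y - c) ^ (m - 1)) := by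
    funext y
    have h1 : HasDerivAt f (deriv f y) y :=
      ((hf.differentiable (by simp)) y).hasDerivAt
    have h2 : HasDerivAt (fun y : ℝ => (y - c) ^ m)
        (((m : ℕ) : ℝ) * (y - c) ^ (m - 1) * 1) y :=
      ((hasDerivAt_id y).sub_const c).pow m
    rw [(h1.fun_mul h2).deriv]; ring
  rw [hderiv, itd_add (cd_nat (hf'.mul (hpow m)) i)
    (cd_nat ((contDiff_const.mul (hf.mul (hpow (m - 1))))) i) c,
    itd_cmul (cd_nat (hf.mul (hpow (m - 1))) i)]

open ContDiff in
lemma keyA (c : ℝ) : ∀ (i : ℕ) (f : ℝ → ℝ), ContDiff ℝ ∞ f → ∀ m, i < m →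
    iteratedDeriv i (fun y => f y * (y - c) ^ m) c = 0 := by
  intro i
  induction i with
  | zero =>
    intro f hf m hm
    simp [iteratedDeriv_zero, sub_self, zero_pow (by omega : m ≠ 0)]
  | succ i ih =>
    intro f hf m hm
    have hf' : ContDiff ℝ ∞ (deriv f) := (contDiff_infty_iff_deriv.mp hf).2
    rw [itd_mul_step c f hf m i, ih _ hf' _ (by omega), ih _ hf _ (by omega)]
    simp

open ContDiff in
lemma keyB (c : ℝ) : ∀ (m : ℕ) (f : ℝ → ℝ), ContDiff ℝ ∞ f →
    iteratedDeriv m (fun y => f y * (y - c) ^ m) c = (m.factorial : ℝ) * f c := by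
  intro m
  induction m with
  | zero => intro f hf; simp
  | succ m ih =>
    intro f hf
    have hf' : ContDiff ℝ ∞ (deriv f) := (contDiff_infty_iff_deriv.mp hf).2
    rw [itd_mul_step c f hf (m + 1) m, keyA c m (deriv f) hf' (m + 1) (by omega)]
    simp only [Nat.add_sub_cancel]
    rw [ih f hf]
    push_cast [Nat.factorial_succ]
    ring

open ContDiff in
lemma keyC (c : ℝ) : ∀ (m : ℕ) (f : ℝ → ℝ), ContDiff ℝ ∞ f →
    iteratedDeriv (m + 1) (fun y => f y * (y - c) ^ m) c
      = ((m + 1).factorial : ℝ) * deriv f c := by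
  intro m
  induction m with
  | zero =>
    intro f hf
    rw [itd_mul_step c f hf 0 0]
    simp
  | succ m ih =>
    intro f hf
    have hf' : ContDiff ℝ ∞ (deriv f) := (contDiff_infty_iff_deriv.mp hf).2
    rw [itd_mul_step c f hf (m + 1) (m + 1), keyB c (m + 1) (deriv f) hf']
    simp only [Nat.add_sub_cancel]
    rw [ih f hf]
    push_cast [Nat.factorial_succ]
    ring

lemma descFac (n : ℕ) : (n + 1).descFactorial n = (n + 1).factorial := by
  induction n with
  | zero => rfl
  | succ n ih =>
    rw [Nat.succ_descFactorial_succ, ih]; rw [Nat.factorial_succ (n + 1)]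

open ContDiff in
/-- The principal symbol map `σ(A) = a_k`, viewed as a density of weight `μ − λ − k`,
is equivariant under the action of vector fields: the top coefficient of
`𝓛_X^{λ,μ}(A)` is `b_k = X·a_k' + (μ−λ−k)·X'·a_k = L_X^{μ−λ−k}(a_k)`. -/
theorem principalSymbol_equivariant (lam μ : ℝ) (k : ℕ) (X : ℝ → ℝ) (a b : ℕ → ℝ → ℝ)
    (hX : ContDiff ℝ (⊤ : ℕ∞) X) (ha : ∀ i, ContDiff ℝ (⊤ : ℕ∞) (a i)) (hbsmooth : ∀ i, ContDiff ℝ (⊤ : ℕ∞) (b i))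
    (hb : ∀ φ : ℝ → ℝ, ContDiff ℝ (⊤ : ℕ∞) φ →
      (fun x => ∑ i ∈ Finset.range (k+1), b i x * iteratedDeriv i φ x)
        = fun x =>
            lieDeriv μ X (fun y => ∑ i ∈ Finset.range (k+1), a i y * iteratedDeriv i φ y) x
              - ∑ i ∈ Finset.range (k+1), a i x * iteratedDeriv i (lieDeriv lam X φ) x) :
    b k = (fun x => X x * deriv (a k) x + (μ - lam - (k : ℝ)) * deriv X x * a k x)
      ∧ b k = lieDeriv (μ - lam - (k : ℝ)) X (a k) := by
  have hXs : ContDiff ℝ ∞ X := hX.of_le (by simp)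
  have hX' : ContDiff ℝ ∞ (deriv X) := (contDiff_infty_iff_deriv.mp hXs).2
  have has : ∀ i, ContDiff ℝ ∞ (a i) := fun i => (ha i).of_le (by simp)
  have hpow : ∀ (c : ℝ) (l : ℕ), ContDiff ℝ ∞ (fun y : ℝ => (y - c) ^ l) := fun c l =>
    (contDiff_id.sub contDiff_const).pow l
  have hkf : (k.factorial : ℝ) ≠ 0 := Nat.cast_ne_zero.mpr k.factorial_ne_zero
  have key : ∀ x₀ : ℝ,
      b k x₀ = X x₀ * deriv (a k) x₀ + (μ - lam - (k : ℝ)) * deriv X x₀ * a k x₀ := by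
    intro x₀
    have hφ : ContDiff ℝ (⊤ : ℕ∞) (fun y : ℝ => (y - x₀) ^ k) :=
      (contDiff_id.sub contDiff_const).pow k
    have E := congrFun (hb _ hφ) x₀
    have hdφ : deriv (fun y : ℝ => (y - x₀) ^ k)
        = fun y => (k : ℝ) * (y - x₀) ^ (k - 1) := by
      rw [← iteratedDeriv_one, itd_pow]
      simp [Nat.descFactorial_one]
    simp only [lieDeriv, hdφ, itd_pow] at E
    -- canonical form of the Lie derivative of φ
    have hL : lieDeriv lam X (fun y : ℝ => (y - x₀) ^ k)
        = fun y : ℝ => (k : ℝ) * (X y * (y - x₀) ^ (k - 1)) + lam * (deriv X y * (y - x₀) ^ k) := by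
      funext y; simp only [lieDeriv, hdφ]; ring
    rw [hL] at E
    -- evaluation of the two simple sums
    have P1 : ∑ i ∈ Finset.range (k + 1),
        b i x₀ * ((k.descFactorial i : ℝ) * (x₀ - x₀) ^ (k - i)) = b k x₀ * (k.factorial : ℝ) := by
      rw [Finset.sum_range_succ, Finset.sum_eq_zero, zero_add, Nat.sub_self, pow_zero,
        Nat.descFactorial_self]
      · ring
      · intro i hi
        have : k - i ≠ 0 := by have := Finset.mem_range.mp hi; omega
        simp [sub_self, zero_pow this]
    have P2 : ∑ i ∈ Finset.range (k + 1),
        a i x₀ * ((k.descFactorial i : ℝ) * (x₀ - x₀) ^ (k - i)) = a k x₀ * (k.factorial : ℝ) := by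
      rw [Finset.sum_range_succ, Finset.sum_eq_zero, zero_add, Nat.sub_self, pow_zero,
        Nat.descFactorial_self]
      · ring
      · intro i hi
        have : k - i ≠ 0 := by have := Finset.mem_range.mp hi; omega
        simp [sub_self, zero_pow this]
    -- derivative of the inner sum
    have hHD : HasDerivAt
        (fun y => ∑ i ∈ Finset.range (k + 1),
          a i y * ((k.descFactorial i : ℝ) * (y - x₀) ^ (k - i)))
        (∑ i ∈ Finset.range (k + 1),
          (deriv (a i) x₀ * ((k.descFactorial i : ℝ) * (x₀ - x₀) ^ (k - i))
            + a i x₀ * ((k.descFactorial i : ℝ)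
                * (((k - i : ℕ) : ℝ) * (x₀ - x₀) ^ (k - i - 1) * 1)))) x₀ := by
      refine HasDerivAt.fun_sum fun i _ => HasDerivAt.fun_mul ?_ ?_
      · exact (((ha i).differentiable (by simp)) x₀).hasDerivAt
      · exact (((hasDerivAt_id x₀).sub_const x₀).pow (k - i)).const_mul _
    rw [hHD.deriv, P1, P2] at E
    -- evaluation of the operator sum
    have PJ : ∑ i ∈ Finset.range (k + 1), a i x₀ * iteratedDeriv i
          (fun y : ℝ => (k : ℝ) * (X y * (y - x₀) ^ (k - 1))
            + lam * (deriv X y * (y - x₀) ^ k)) x₀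
        = (∑ i ∈ Finset.range k,
            a i x₀ * ((k : ℝ) * iteratedDeriv i (fun y => X y * (y - x₀) ^ (k - 1)) x₀))
          + a k x₀ * (((k : ℝ) * (k.factorial : ℝ) + lam * (k.factorial : ℝ)) * deriv X x₀) := by
      rw [Finset.sum_range_succ]
      congr 1
      · refine Finset.sum_congr rfl fun i hi => ?_
        have hik := Finset.mem_range.mp hi
        rw [itd_add (cd_nat (contDiff_const.mul (hXs.mul (hpow x₀ (k - 1)))) i)
            (cd_nat (contDiff_const.mul (hX'.mul (hpow x₀ k))) i),
          itd_cmul (cd_nat (hXs.mul (hpow x₀ (k - 1))) i),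
          itd_cmul (cd_nat (hX'.mul (hpow x₀ k)) i),
          keyA x₀ i (deriv X) hX' k hik]
        ring
      · rw [itd_add (cd_nat (contDiff_const.mul (hXs.mul (hpow x₀ (k - 1)))) k)
            (cd_nat (contDiff_const.mul (hX'.mul (hpow x₀ k))) k),
          itd_cmul (cd_nat (hXs.mul (hpow x₀ (k - 1))) k),
          itd_cmul (cd_nat (hX'.mul (hpow x₀ k)) k),
          keyB x₀ k (deriv X) hX']
        have hV1k : (k : ℝ) * iteratedDeriv k (fun y => X y * (y - x₀) ^ (k - 1)) x₀
            = (k : ℝ) * ((k.factorial : ℝ) * deriv X x₀) := by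
          cases k with
          | zero => simp
          | succ n =>
            simp only [Nat.add_sub_cancel]
            rw [keyC x₀ n X hXs]
        rw [hV1k]; ring
    rw [PJ] at E
    -- cancellation of the lower-order terms
    have PD : X x₀ * (∑ i ∈ Finset.range (k + 1),
          (deriv (a i) x₀ * ((k.descFactorial i : ℝ) * (x₀ - x₀) ^ (k - i))
            + a i x₀ * ((k.descFactorial i : ℝ)
                * (((k - i : ℕ) : ℝ) * (x₀ - x₀) ^ (k - i - 1) * 1))))
        = (∑ i ∈ Finset.range k,
            a i x₀ * ((k : ℝ) * iteratedDeriv i (fun y => X y * (y - x₀) ^ (k - 1)) x₀))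
          + X x₀ * (deriv (a k) x₀ * (k.factorial : ℝ)) := by
      rw [Finset.sum_range_succ, mul_add, Finset.mul_sum]
      congr 1
      · refine Finset.sum_congr rfl fun i hi => ?_
        have hik := Finset.mem_range.mp hi
        by_cases h1 : i + 1 = k
        · subst h1
          simp only [show i + 1 - i = 1 from by omega, show i + 1 - i - 1 = 0 from by omega,
            show i + 1 - 1 = i from by omega, pow_one, pow_zero, sub_self, descFac i,
            Nat.cast_one]
          rw [keyB x₀ i X hXs]
          push_cast [Nat.factorial_succ]
          ring
        · have e0 : k - i ≠ 0 := by omega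
          have e0' : k - i - 1 ≠ 0 := by omega
          rw [keyA x₀ i X hXs (k - 1) (by omega)]
          simp [sub_self, zero_pow e0, zero_pow e0']
      · have e1 : k - k = 0 := Nat.sub_self k
        rw [e1]
        simp only [pow_zero, Nat.cast_zero, Nat.descFactorial_self, sub_self]
        ring
    rw [PD] at E
    have hgoal : b k x₀ * (k.factorial : ℝ)
        = (X x₀ * deriv (a k) x₀ + (μ - lam - (k : ℝ)) * deriv X x₀ * a k x₀)
            * (k.factorial : ℝ) := by
      rw [E]; ring
    exact mul_right_cancel₀ hkf hgoal
  exact ⟨funext fun x => key x, funext fun x => (key x).trans (by simp [lieDeriv])⟩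
end

section
/- Let λ, μ ∈ ℝ, let k ∈ ℕ, let X : ℝ → ℝ be smooth with X'' = 0 (an affine vector field), let a_0, …, a_k : ℝ → ℝ be smooth, and let b_0, …, b_k : ℝ → ℝ be smooth functions such that Σ_{i=0}^{k} b_i·φ^{(i)} = L_X^μ( Σ_{i=0}^{k} a_i·φ^{(i)} ) − Σ_{i=0}^{k} a_i·(L_X^λ φ)^{(i)} for every smooth φ : ℝ → ℝ. Then for every i ∈ {0, …, k}, b_i = X·a_i' + (μ − λ − i)·X'·a_i. In particular, the action of affine vector fields on differential operators from λ-densities to μ-densities depends only on the difference μ − λ, and coincides with the action on the corresponding symbols. -/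
open Finset

lemma diff_iter_s5 {φ : ℝ → ℝ} (hφ : ContDiff ℝ (⊤ : ℕ∞) φ) (n : ℕ) :
    Differentiable ℝ (iteratedDeriv n φ) := by
  rw [iteratedDeriv_eq_iterate]
  exact (ContDiff.iterate_deriv (𝕜 := ℝ) n (hφ.of_le (by simp))).differentiable
    (by simp)

lemma hasDerivAt_iter {φ : ℝ → ℝ} (hφ : ContDiff ℝ (⊤ : ℕ∞) φ) (n : ℕ) (x : ℝ) :
    HasDerivAt (iteratedDeriv n φ) (iteratedDeriv (n+1) φ x) x := by
  have h := (diff_iter_s5 hφ n x).hasDerivAt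
  rwa [← iteratedDeriv_succ] at h

/-- Leibniz formula: `(L_X^λ φ)^{(n)} = X φ^{(n+1)} + (n+λ) X' φ^{(n)}` when `X'' = 0`. -/
lemma iteratedDeriv_lieDeriv (lam : ℝ) (X φ : ℝ → ℝ) (hX : ContDiff ℝ (⊤ : ℕ∞) X)
    (hX'' : deriv (deriv X) = 0) (hφ : ContDiff ℝ (⊤ : ℕ∞) φ) (n : ℕ) :
    iteratedDeriv n (lieDeriv lam X φ) =
      fun x => X x * iteratedDeriv (n+1) φ x + ((n : ℝ) + lam) * deriv X x * iteratedDeriv n φ x := by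
  have hdX : Differentiable ℝ (deriv X) := by
    have := diff_iter_s5 hX 1; rwa [iteratedDeriv_one] at this
  induction n with
  | zero => funext x; simp [lieDeriv, iteratedDeriv_one, iteratedDeriv_zero]
  | succ n ih =>
    rw [iteratedDeriv_succ, ih]
    funext x
    have h1 : HasDerivAt X (deriv X x) x := ((hX.differentiable (by simp)) x).hasDerivAt
    have e : deriv (deriv X) x = 0 := by rw [hX'']; rfl
    have h3 : HasDerivAt (deriv X) 0 x := by
      have h := (hdX x).hasDerivAt; rwa [e] at h
    have h0 := hasDerivAt_iter hφ n x
    have h2 := hasDerivAt_iter hφ (n+1) x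
    have H := (h1.fun_mul h2).fun_add (((h3.fun_mul h0).const_mul ((n : ℝ) + lam)))
    have H' : HasDerivAt
        (fun x => X x * iteratedDeriv (n+1) φ x + ((n : ℝ) + lam) * deriv X x * iteratedDeriv n φ x)
        (deriv X x * iteratedDeriv (n+1) φ x + X x * iteratedDeriv (n+1+1) φ x +
          ((n : ℝ) + lam) * (0 * iteratedDeriv n φ x + deriv X x * iteratedDeriv (n+1) φ x)) x := by
      simpa only [mul_assoc] using H
    rw [H'.deriv]
    push_cast
    ring

/-- iterated derivative of a shifted monomial. -/
lemma iteratedDeriv_shift_pow (c : ℝ) (j : ℕ) : ∀ i : ℕ,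
    iteratedDeriv i (fun y : ℝ => (y - c) ^ j) =
      fun x => (j.descFactorial i : ℝ) * (x - c) ^ (j - i) := by
  intro i
  induction i with
  | zero => funext x; simp
  | succ i ih =>
    rw [iteratedDeriv_succ, ih]
    funext x
    have hp : HasDerivAt (fun x : ℝ => (x - c) ^ (j - i))
        ((j - i : ℕ) * (x - c) ^ (j - i - 1)) x := by
      simpa using ((hasDerivAt_id x).sub_const c).fun_pow (j - i)
    have H := hp.const_mul ((j.descFactorial i : ℝ))
    rw [H.deriv, Nat.descFactorial_succ, show j - i - 1 = j - (i+1) from by omega]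
    push_cast
    ring

lemma iteratedDeriv_shift_pow_self (c : ℝ) (j i : ℕ) :
    iteratedDeriv i (fun y : ℝ => (y - c) ^ j) c = if i = j then (j.factorial : ℝ) else 0 := by
  rw [iteratedDeriv_shift_pow]
  rcases lt_trichotomy i j with h | h | h
  · have : j - i ≠ 0 := Nat.sub_ne_zero_of_lt h
    simp [sub_self, zero_pow this, h.ne]
  · subst h; simp [Nat.descFactorial_self]
  · have : j.descFactorial i = 0 := Nat.descFactorial_eq_zero_iff_lt.mpr h
    simp [this, h.ne']

/-- The RHS of the defining identity, computed explicitly. -/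
lemma key_identity (lam μ : ℝ) (k : ℕ) (X : ℝ → ℝ) (a : ℕ → ℝ → ℝ)
    (hX : ContDiff ℝ (⊤ : ℕ∞) X) (hX'' : deriv (deriv X) = 0)
    (ha : ∀ i, ContDiff ℝ (⊤ : ℕ∞) (a i)) (φ : ℝ → ℝ) (hφ : ContDiff ℝ (⊤ : ℕ∞) φ) (x : ℝ) :
    lieDeriv μ X (fun y => ∑ i ∈ Finset.range (k+1), a i y * iteratedDeriv i φ y) x
      - ∑ i ∈ Finset.range (k+1), a i x * iteratedDeriv i (lieDeriv lam X φ) x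
    = ∑ i ∈ Finset.range (k+1),
        (X x * deriv (a i) x + (μ - lam - (i : ℝ)) * deriv X x * a i x) * iteratedDeriv i φ x := by
  have hsum : deriv (fun y => ∑ i ∈ Finset.range (k+1), a i y * iteratedDeriv i φ y) x
      = ∑ i ∈ Finset.range (k+1),
          (deriv (a i) x * iteratedDeriv i φ x + a i x * iteratedDeriv (i+1) φ x) := by
    rw [deriv_fun_sum (fun i _ => (((ha i).differentiable (by simp) x).fun_mul (diff_iter_s5 hφ i x)))]
    exact Finset.sum_congr rfl fun i _ =>
      ((((ha i).differentiable (by simp) x).hasDerivAt.mul (hasDerivAt_iter hφ i x)).deriv)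
  have hld : ∀ i, iteratedDeriv i (lieDeriv lam X φ) x
      = X x * iteratedDeriv (i+1) φ x + ((i : ℝ) + lam) * deriv X x * iteratedDeriv i φ x := by
    intro i; rw [iteratedDeriv_lieDeriv lam X φ hX hX'' hφ i]
  simp only [lieDeriv, hsum, hld]
  rw [Finset.mul_sum, Finset.mul_sum, ← Finset.sum_add_distrib, ← Finset.sum_sub_distrib]
  exact Finset.sum_congr rfl fun i _ => by ring

/-- For an affine vector field `X` (i.e. `X'' = 0`), the coefficients of the Lie
derivative `𝓛_X^{λ,μ}(A)` are `b_i = X·a_i' + (μ−λ−i)·X'·a_i`: the action of affine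
vector fields on differential operators depends only on `μ − λ` and coincides with the
action on symbols. -/
theorem affine_action_on_diffOps (lam μ : ℝ) (k : ℕ) (X : ℝ → ℝ) (a b : ℕ → ℝ → ℝ)
    (hX : ContDiff ℝ (⊤ : ℕ∞) X) (hX'' : deriv (deriv X) = 0)
    (ha : ∀ i, ContDiff ℝ (⊤ : ℕ∞) (a i)) (hbsmooth : ∀ i, ContDiff ℝ (⊤ : ℕ∞) (b i))
    (hb : ∀ φ : ℝ → ℝ, ContDiff ℝ (⊤ : ℕ∞) φ →
      (fun x => ∑ i ∈ Finset.range (k+1), b i x * iteratedDeriv i φ x)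
        = fun x =>
            lieDeriv μ X (fun y => ∑ i ∈ Finset.range (k+1), a i y * iteratedDeriv i φ y) x
              - ∑ i ∈ Finset.range (k+1), a i x * iteratedDeriv i (lieDeriv lam X φ) x) :
    ∀ i, i ≤ k →
      b i = fun x => X x * deriv (a i) x + (μ - lam - (i : ℝ)) * deriv X x * a i x := by
  intro j hj
  funext x₀
  set φ : ℝ → ℝ := fun y => (y - x₀) ^ j with hφdef
  have hφ : ContDiff ℝ (⊤ : ℕ∞) φ := (contDiff_id.sub contDiff_const).pow j
  have h1 := congrFun (hb φ hφ) x₀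
  rw [key_identity lam μ k X a hX hX'' ha φ hφ x₀] at h1
  have hD : ∀ i, iteratedDeriv i φ x₀ = if i = j then (j.factorial : ℝ) else 0 := fun i =>
    iteratedDeriv_shift_pow_self x₀ j i
  simp only [hD, mul_ite, mul_zero] at h1
  rw [Finset.sum_ite_eq' (Finset.range (k+1)) j, Finset.sum_ite_eq' (Finset.range (k+1)) j,
    if_pos (Finset.mem_range.mpr (Nat.lt_succ_of_le hj)),
    if_pos (Finset.mem_range.mpr (Nat.lt_succ_of_le hj))] at h1
  have hfac : (j.factorial : ℝ) ≠ 0 := Nat.cast_ne_zero.mpr (Nat.factorial_ne_zero j)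
  exact mul_right_cancel₀ hfac h1
end

section
/- Let λ, μ ∈ ℝ, let k ∈ ℕ, let X : ℝ → ℝ be the vector field X(x) = x², let a_0, …, a_k : ℝ → ℝ be smooth (set a_{k+1} := 0), and let b_0, …, b_k : ℝ → ℝ be smooth functions such that Σ_{i=0}^{k} b_i·φ^{(i)} = L_X^μ( Σ_{i=0}^{k} a_i·φ^{(i)} ) − Σ_{i=0}^{k} a_i·(L_X^λ φ)^{(i)} for every smooth φ : ℝ → ℝ. Then for every i ∈ {0, …, k} and every x ∈ ℝ, b_i(x) = x²·a_i'(x) + 2(μ − λ − i)·x·a_i(x) − (i+1)(i+2λ)·a_{i+1}(x). -/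
open Finset

lemma iter_centered (c : ℝ) (m : ℕ) (n : ℕ) :
    iteratedDeriv n (fun y : ℝ => (y - c)^m)
      = fun x => (Nat.descFactorial m n : ℝ) * (x - c)^(m - n) := by
  induction n with
  | zero => simp
  | succ n ih =>
    rw [iteratedDeriv_succ, ih]
    funext x
    have h : HasDerivAt (fun x : ℝ => (Nat.descFactorial m n : ℝ) * (x - c)^(m-n))
        ((Nat.descFactorial m n : ℝ) * (((m - n : ℕ) : ℝ) * (x - c)^(m - n - 1) * 1)) x :=
      (((hasDerivAt_id x).sub_const c).pow (m-n)).const_mul _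
    rw [h.deriv, Nat.descFactorial_succ]
    have : m - n - 1 = m - (n+1) := by omega
    rw [this]
    push_cast
    ring

lemma cd_centered (c : ℝ) (m : ℕ) : ContDiff ℝ (⊤ : ℕ∞) (fun y : ℝ => (y - c)^m) :=
  (contDiff_id.sub contDiff_const).pow m

lemma iterDeriv_cmul (c : ℝ) (f : ℝ → ℝ) (hf : ContDiff ℝ (⊤ : ℕ∞) f) (n : ℕ) :
    iteratedDeriv n (fun x => c * f x) = fun x => c * iteratedDeriv n f x := by
  induction n with
  | zero => simp
  | succ n ih =>
    rw [iteratedDeriv_succ, ih, iteratedDeriv_succ]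
    funext x
    exact deriv_const_mul c ((hf.differentiable_iteratedDeriv n (by exact_mod_cast ENat.coe_lt_top n)).differentiableAt)

lemma iterDeriv_add (f g : ℝ → ℝ) (hf : ContDiff ℝ (⊤ : ℕ∞) f) (hg : ContDiff ℝ (⊤ : ℕ∞) g) (n : ℕ) :
    iteratedDeriv n (fun x => f x + g x) = fun x => iteratedDeriv n f x + iteratedDeriv n g x := by
  induction n with
  | zero => simp
  | succ n ih =>
    rw [iteratedDeriv_succ, ih, iteratedDeriv_succ, iteratedDeriv_succ]
    funext x
    exact deriv_fun_add ((hf.differentiable_iteratedDeriv n (by exact_mod_cast ENat.coe_lt_top n)).differentiableAt)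
      ((hg.differentiable_iteratedDeriv n (by exact_mod_cast ENat.coe_lt_top n)).differentiableAt)

lemma sum_delta (k m : ℕ) (g : ℕ → ℝ) (h0 : ∀ i, m < i → g i = 0)
    (hm : m ≤ k ∨ g m = 0) :
    ∑ i ∈ range (k+1), g i * (0:ℝ)^(m-i) = g m := by
  by_cases hmk : m ≤ k
  · rw [Finset.sum_eq_single m]
    · simp
    · intro i hi hne
      rcases lt_or_gt_of_ne hne with h | h
      · rw [zero_pow (by omega)]; ring
      · rw [h0 i h]; ring
    · intro h; exact absurd (mem_range.2 (by omega)) h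
  · have hg : g m = 0 := hm.resolve_left hmk
    rw [hg, Finset.sum_eq_zero]
    intro i hi
    rw [zero_pow (by simp at hi; omega)]
    ring

lemma iter_poly5 (x A B C D E : ℝ) (p q r s t i : ℕ) :
    iteratedDeriv i (fun y : ℝ => A*(y-x)^p + (B*(y-x)^q + (C*(y-x)^r + (D*(y-x)^s + E*(y-x)^t))))
    = fun z => A*((Nat.descFactorial p i : ℝ)*(z-x)^(p-i))
        + (B*((Nat.descFactorial q i : ℝ)*(z-x)^(q-i))
        + (C*((Nat.descFactorial r i : ℝ)*(z-x)^(r-i))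
        + (D*((Nat.descFactorial s i : ℝ)*(z-x)^(s-i))
        + E*((Nat.descFactorial t i : ℝ)*(z-x)^(t-i))))) := by
  have h : ∀ (c : ℝ) (m : ℕ), ContDiff ℝ (⊤ : ℕ∞) (fun y : ℝ => c*(y-x)^m) :=
    fun c m => contDiff_const.mul (cd_centered x m)
  rw [iterDeriv_add _ _ (h A p) ((h B q).add ((h C r).add ((h D s).add (h E t)))),
      iterDeriv_add _ _ (h B q) ((h C r).add ((h D s).add (h E t))),
      iterDeriv_add _ _ (h C r) ((h D s).add (h E t)),
      iterDeriv_add _ _ (h D s) (h E t),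
      iterDeriv_cmul A _ (cd_centered x p), iterDeriv_cmul B _ (cd_centered x q),
      iterDeriv_cmul C _ (cd_centered x r), iterDeriv_cmul D _ (cd_centered x s),
      iterDeriv_cmul E _ (cd_centered x t)]
  simp only [iter_centered]

/-- The coefficients of the Lie derivative `𝓛_X^{λ,μ}(A)` along the vector field
`X(x) = x²` are `b_i(x) = x²·a_i'(x) + 2(μ−λ−i)·x·a_i(x) − (i+1)(i+2λ)·a_{i+1}(x)`. -/
theorem quadratic_field_action (lam μ : ℝ) (k : ℕ) (a b : ℕ → ℝ → ℝ)
    (ha : ∀ i, ContDiff ℝ (⊤ : ℕ∞) (a i)) (ha' : a (k+1) = 0)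
    (hbsmooth : ∀ i, ContDiff ℝ (⊤ : ℕ∞) (b i))
    (hb : ∀ φ : ℝ → ℝ, ContDiff ℝ (⊤ : ℕ∞) φ →
      (fun x => ∑ i ∈ Finset.range (k+1), b i x * iteratedDeriv i φ x)
        = fun x =>
            lieDeriv μ (fun y => y^2)
              (fun y => ∑ i ∈ Finset.range (k+1), a i y * iteratedDeriv i φ y) x
              - ∑ i ∈ Finset.range (k+1),
                  a i x * iteratedDeriv i (lieDeriv lam (fun y => y^2) φ) x) :
    ∀ i, i ≤ k → ∀ x : ℝ,
      b i x = x^2 * deriv (a i) x + 2 * (μ - lam - (i : ℝ)) * x * a i x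
        - ((i : ℝ) + 1) * ((i : ℝ) + 2 * lam) * a (i+1) x := by
  intro j hj x
  have key := congrFun (hb (fun y => (y - x)^j) (cd_centered x j)) x
  have hL : lieDeriv lam (fun y => y^2) (fun y => (y - x)^j)
      = fun y : ℝ => (j:ℝ)*(y-x)^((j-1)+2) + (2*x*(j:ℝ)*(y-x)^((j-1)+1)
        + (x^2*(j:ℝ)*(y-x)^(j-1) + (2*lam*(y-x)^(j+1) + 2*lam*x*(y-x)^j))) := by
    funext y
    simp only [lieDeriv]
    rw [show deriv (fun y : ℝ => (y-x)^j) = fun z => (Nat.descFactorial j 1 : ℝ) * (z - x)^(j-1) from by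
      rw [← iteratedDeriv_one]; exact iter_centered x j 1]
    simp only [Nat.descFactorial_one, deriv_pow_field]
    push_cast
    ring
  rw [hL] at key
  simp only [iter_poly5, iter_centered, lieDeriv, sub_self] at key

  -- derivative of the middle function
  have hGd : HasDerivAt (fun y : ℝ => ∑ i ∈ Finset.range (k + 1),
        a i y * ((j.descFactorial i : ℝ) * (y - x) ^ (j - i)))
      (∑ i ∈ Finset.range (k + 1),
        (deriv (a i) x * ((j.descFactorial i : ℝ) * (x - x) ^ (j - i))
          + a i x * ((j.descFactorial i : ℝ) * (((j - i : ℕ) : ℝ) * (x - x) ^ (j - i - 1) * 1)))) x := by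
    apply HasDerivAt.fun_sum
    intro i _
    exact (((ha i).differentiable (by simp) x).hasDerivAt).mul
      ((((hasDerivAt_id x).sub_const x).pow (j - i)).const_mul _)
  have hd1 := hGd.deriv
  simp only [sub_self] at hd1
  have hd2 : deriv (fun y : ℝ => y ^ 2) x = 2 * x := by
    simp [deriv_pow_field]
  rw [hd1, hd2] at key
  have hdf : ∀ (m i : ℕ), m < i → ((Nat.descFactorial m i : ℝ)) = 0 := fun m i h => by
    simp [Nat.descFactorial_eq_zero_iff_lt.2 h]
  -- left-hand side sum
  have S1 : ∑ i ∈ Finset.range (k + 1), b i x * ((j.descFactorial i : ℝ) * (0:ℝ) ^ (j - i))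
      = b j x * (j.descFactorial j : ℝ) := by
    have h := sum_delta k j (fun i => b i x * (j.descFactorial i : ℝ))
      (fun i hi => by simp [hdf _ i hi]) (Or.inl hj)
    beta_reduce at h
    rw [← h]
    exact Finset.sum_congr rfl (fun i _ => by ring)
  have S2 : ∑ i ∈ Finset.range (k + 1), a i x * ((j.descFactorial i : ℝ) * (0:ℝ) ^ (j - i))
      = a j x * (j.descFactorial j : ℝ) := by
    have h := sum_delta k j (fun i => a i x * (j.descFactorial i : ℝ))
      (fun i hi => by simp [hdf _ i hi]) (Or.inl hj)
    beta_reduce at h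
    rw [← h]
    exact Finset.sum_congr rfl (fun i _ => by ring)
  -- the derivative sum
  have S3 : ∑ i ∈ Finset.range (k + 1),
        (deriv (a i) x * ((j.descFactorial i : ℝ) * (0:ℝ) ^ (j - i))
          + a i x * ((j.descFactorial i : ℝ) * (((j - i : ℕ) : ℝ) * (0:ℝ) ^ (j - i - 1) * 1)))
      = deriv (a j) x * (j.descFactorial j : ℝ)
        + a (j-1) x * ((j.descFactorial (j-1) : ℝ) * ((j - (j-1) : ℕ) : ℝ)) := by
    rw [Finset.sum_add_distrib]
    have h1 := sum_delta k j (fun i => deriv (a i) x * (j.descFactorial i : ℝ))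
      (fun i hi => by simp [hdf _ i hi]) (Or.inl hj)
    have h2 := sum_delta k (j-1) (fun i => a i x * ((j.descFactorial i : ℝ) * ((j - i : ℕ) : ℝ)))
      (fun i hi => by
        beta_reduce
        by_cases hij : j < i
        · rw [hdf j i hij]; ring
        · have hji : j - i = 0 := by omega
          rw [hji]; push_cast; ring) (Or.inl (by omega))
    beta_reduce at h1 h2
    rw [← h1, ← h2]
    congr 1
    · exact Finset.sum_congr rfl (fun i _ => by ring)
    · exact Finset.sum_congr rfl (fun i _ => by
        rw [show j - i - 1 = j - 1 - i from by omega]; ring)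
  -- the big operator sum
  have S4 : ∑ i ∈ Finset.range (k + 1),
        a i x *
          ((j:ℝ) * ((((j - 1 + 2).descFactorial i : ℕ) : ℝ) * (0:ℝ) ^ (j - 1 + 2 - i)) +
            (2 * x * (j:ℝ) * ((((j - 1 + 1).descFactorial i : ℕ) : ℝ) * (0:ℝ) ^ (j - 1 + 1 - i)) +
              (x ^ 2 * (j:ℝ) * ((((j - 1).descFactorial i : ℕ) : ℝ) * (0:ℝ) ^ (j - 1 - i)) +
                (2 * lam * ((((j + 1).descFactorial i : ℕ) : ℝ) * (0:ℝ) ^ (j + 1 - i)) +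
                  2 * lam * x * (((j.descFactorial i : ℕ) : ℝ) * (0:ℝ) ^ (j - i))))))
      = (j:ℝ) * a (j-1+2) x * ((j-1+2).descFactorial (j-1+2) : ℝ)
        + 2 * x * (j:ℝ) * a (j-1+1) x * ((j-1+1).descFactorial (j-1+1) : ℝ)
        + x ^ 2 * (j:ℝ) * a (j-1) x * ((j-1).descFactorial (j-1) : ℝ)
        + 2 * lam * a (j+1) x * ((j+1).descFactorial (j+1) : ℝ)
        + 2 * lam * x * a j x * (j.descFactorial j : ℝ) := by
    have e : ∀ i ∈ Finset.range (k+1),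
        a i x *
          ((j:ℝ) * ((((j - 1 + 2).descFactorial i : ℕ) : ℝ) * (0:ℝ) ^ (j - 1 + 2 - i)) +
            (2 * x * (j:ℝ) * ((((j - 1 + 1).descFactorial i : ℕ) : ℝ) * (0:ℝ) ^ (j - 1 + 1 - i)) +
              (x ^ 2 * (j:ℝ) * ((((j - 1).descFactorial i : ℕ) : ℝ) * (0:ℝ) ^ (j - 1 - i)) +
                (2 * lam * ((((j + 1).descFactorial i : ℕ) : ℝ) * (0:ℝ) ^ (j + 1 - i)) +
                  2 * lam * x * (((j.descFactorial i : ℕ) : ℝ) * (0:ℝ) ^ (j - i))))))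
        = (j:ℝ) * a i x * ((j-1+2).descFactorial i : ℝ) * (0:ℝ) ^ (j - 1 + 2 - i)
          + (2 * x * (j:ℝ) * a i x * ((j-1+1).descFactorial i : ℝ) * (0:ℝ) ^ (j - 1 + 1 - i)
          + (x ^ 2 * (j:ℝ) * a i x * ((j-1).descFactorial i : ℝ) * (0:ℝ) ^ (j - 1 - i)
          + (2 * lam * a i x * ((j+1).descFactorial i : ℝ) * (0:ℝ) ^ (j + 1 - i)
          + 2 * lam * x * a i x * (j.descFactorial i : ℝ) * (0:ℝ) ^ (j - i)))) :=
      fun i _ => by ring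
    rw [Finset.sum_congr rfl e, Finset.sum_add_distrib, Finset.sum_add_distrib,
      Finset.sum_add_distrib, Finset.sum_add_distrib]
    have h1 := sum_delta k (j-1+2) (fun i => (j:ℝ) * a i x * ((j-1+2).descFactorial i : ℝ))
      (fun i hi => by simp [hdf _ i hi])
      (by
        rcases Nat.eq_zero_or_pos j with h0j | h0j
        · right; simp [h0j]
        · by_cases hjk : j = k
          · right
            have h2 : j - 1 + 2 = k + 1 := by omega
            simp [h2, ha']
          · left; omega)
    have h2 := sum_delta k (j-1+1) (fun i => 2 * x * (j:ℝ) * a i x * ((j-1+1).descFactorial i : ℝ))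
      (fun i hi => by simp [hdf _ i hi])
      (by
        rcases Nat.eq_zero_or_pos j with h0j | h0j
        · right; simp [h0j]
        · left; omega)
    have h3 := sum_delta k (j-1) (fun i => x ^ 2 * (j:ℝ) * a i x * ((j-1).descFactorial i : ℝ))
      (fun i hi => by simp [hdf _ i hi]) (Or.inl (by omega))
    have h4 := sum_delta k (j+1) (fun i => 2 * lam * a i x * ((j+1).descFactorial i : ℝ))
      (fun i hi => by simp [hdf _ i hi])
      (by
        by_cases hjk : j = k
        · right; simp [hjk, ha']
        · left; omega)
    have h5 := sum_delta k j (fun i => 2 * lam * x * a i x * (j.descFactorial i : ℝ))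
      (fun i hi => by simp [hdf _ i hi]) (Or.inl hj)
    beta_reduce at h1 h2 h3 h4 h5
    rw [h1, h2, h3, h4, h5]
    ring
  rw [S1, S2, S3, S4] at key
  rcases j with _ | n
  · norm_num [Nat.descFactorial] at key
    push_cast
    linear_combination key
  · have hds : Nat.descFactorial (n+1) n = Nat.factorial (n+1) := by
      have h := Nat.descFactorial_succ (n+1) n
      rw [Nat.descFactorial_self] at h
      simpa [show n + 1 - n = 1 from by omega] using h.symm
    simp only [Nat.add_sub_cancel] at key
    rw [show n + 1 - n = 1 from by omega] at key
    simp only [Nat.descFactorial_self, hds] at key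
    rw [Nat.factorial_succ (n+1), Nat.factorial_succ n] at key
    push_cast at key ⊢
    have hfac : ((n:ℝ) + 1) * (Nat.factorial n : ℝ) ≠ 0 :=
      mul_ne_zero (by positivity) (Nat.cast_ne_zero.2 (Nat.factorial_ne_zero n))
    refine mul_right_cancel₀ hfac ?_
    linear_combination key
end

section
/- Let λ, μ ∈ ℝ, let k ∈ ℕ, let X : ℝ → ℝ be the vector field X(x) = x³, let a_0, …, a_k : ℝ → ℝ be smooth (set a_{k+1} := 0 and a_{k+2} := 0), and let b_0, …, b_k : ℝ → ℝ be smooth functions such that Σ_{i=0}^{k} b_i·φ^{(i)} = L_X^μ( Σ_{i=0}^{k} a_i·φ^{(i)} ) − Σ_{i=0}^{k} a_i·(L_X^λ φ)^{(i)} for every smooth φ : ℝ → ℝ. Then for every i ∈ {0, …, k} and every x ∈ ℝ, b_i(x) = x³·a_i'(x) + 3(μ − λ − i)·x²·a_i(x) − 3(i+1)(i+2λ)·x·a_{i+1}(x) − (i+1)(i+2)(i+3λ)·a_{i+2}(x). -/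
open Finset

private lemma hasDerivAt_pow_shift (c : ℝ) (n : ℕ) (y : ℝ) :
    HasDerivAt (fun z : ℝ => (z - c)^n) ((n:ℝ) * (y - c)^(n-1)) y := by
  simpa using ((hasDerivAt_id y).sub_const c).fun_pow n

private lemma dF_zero (n i : ℕ) :
    (n.descFactorial i : ℝ) * (0:ℝ)^(n-i) = if i = n then (n.factorial : ℝ) else 0 := by
  rcases lt_trichotomy i n with h|rfl|h
  · simp [Nat.sub_ne_zero_of_lt h, h.ne]
  · simp [Nat.descFactorial_self]
  · simp [Nat.descFactorial_eq_zero_iff_lt.mpr h, h.ne']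

private lemma iter_pow (c : ℝ) (n : ℕ) : ∀ i : ℕ,
    iteratedDeriv i (fun y : ℝ => (y - c)^n)
      = fun y => (n.descFactorial i : ℝ) * (y - c)^(n - i) := by
  intro i
  induction i with
  | zero => simp
  | succ i ih =>
    rw [iteratedDeriv_succ, ih]
    funext y
    have h : HasDerivAt (fun y : ℝ => (n.descFactorial i : ℝ) * (y - c)^(n-i))
        ((n.descFactorial i : ℝ) * (((n-i : ℕ):ℝ) * (y - c)^(n-i-1))) y :=
      (hasDerivAt_pow_shift c (n-i) y).const_mul _
    rw [h.deriv]
    simp only [Nat.descFactorial_succ, Nat.cast_mul, Nat.sub_sub]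
    ring

private lemma iter_pow_at (c : ℝ) (n i : ℕ) :
    iteratedDeriv i (fun y : ℝ => (y - c)^n) c = if i = n then (n.factorial : ℝ) else 0 := by
  rw [iter_pow, ← dF_zero n i]
  simp

private lemma iter_comb (c A B C D : ℝ) (p q r s : ℕ) : ∀ i : ℕ,
    iteratedDeriv i (fun y : ℝ =>
        A * (y - c)^p + B * (y - c)^q + C * (y - c)^r + D * (y - c)^s)
      = fun y => A * (p.descFactorial i : ℝ) * (y - c)^(p - i)
          + B * (q.descFactorial i : ℝ) * (y - c)^(q - i)
          + C * (r.descFactorial i : ℝ) * (y - c)^(r - i)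
          + D * (s.descFactorial i : ℝ) * (y - c)^(s - i) := by
  intro i
  induction i with
  | zero => simp
  | succ i ih =>
    rw [iteratedDeriv_succ, ih]
    funext y
    have h1 : HasDerivAt (fun y : ℝ => A * (p.descFactorial i : ℝ) * (y - c)^(p-i))
        (A * (p.descFactorial i : ℝ) * (((p-i : ℕ):ℝ) * (y - c)^(p-i-1))) y :=
      (hasDerivAt_pow_shift c (p-i) y).const_mul _
    have h2 : HasDerivAt (fun y : ℝ => B * (q.descFactorial i : ℝ) * (y - c)^(q-i))
        (B * (q.descFactorial i : ℝ) * (((q-i : ℕ):ℝ) * (y - c)^(q-i-1))) y :=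
      (hasDerivAt_pow_shift c (q-i) y).const_mul _
    have h3 : HasDerivAt (fun y : ℝ => C * (r.descFactorial i : ℝ) * (y - c)^(r-i))
        (C * (r.descFactorial i : ℝ) * (((r-i : ℕ):ℝ) * (y - c)^(r-i-1))) y :=
      (hasDerivAt_pow_shift c (r-i) y).const_mul _
    have h4 : HasDerivAt (fun y : ℝ => D * (s.descFactorial i : ℝ) * (y - c)^(s-i))
        (D * (s.descFactorial i : ℝ) * (((s-i : ℕ):ℝ) * (y - c)^(s-i-1))) y :=
      (hasDerivAt_pow_shift c (s-i) y).const_mul _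
    rw [(((h1.fun_add h2).fun_add h3).fun_add h4).deriv]
    simp only [Nat.descFactorial_succ, Nat.cast_mul, Nat.sub_sub]
    ring

private lemma iter_comb_at (c A B C D : ℝ) (p q r s : ℕ) (i : ℕ) :
    iteratedDeriv i (fun y : ℝ =>
        A * (y - c)^p + B * (y - c)^q + C * (y - c)^r + D * (y - c)^s) c
      = A * (if i = p then (p.factorial : ℝ) else 0)
          + B * (if i = q then (q.factorial : ℝ) else 0)
          + C * (if i = r then (r.factorial : ℝ) else 0)
          + D * (if i = s then (s.factorial : ℝ) else 0) := by
  rw [iter_comb]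
  simp only [sub_self, mul_assoc, dF_zero]

private lemma collapse (N j : ℕ) (hj : j < N) (f : ℕ → ℝ) (Cst : ℝ) :
    ∑ i ∈ Finset.range N, f i * (if i = j then Cst else 0) = f j * Cst := by
  simp only [mul_ite, mul_zero, Finset.sum_ite_eq', Finset.mem_range, if_pos hj]

private lemma collapse_shift (N m : ℕ) (hm : m - 1 < N + 1) (f : ℕ → ℝ) :
    ∑ i ∈ Finset.range (N+1), f i * (if i+1 = m then (m.factorial : ℝ) else 0)
      = (m:ℝ) * ((m-1).factorial : ℝ) * f (m-1) := by
  rcases m with _|n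
  · simp
  · have h : ∀ i : ℕ, (if i+1 = n+1 then ((n+1).factorial:ℝ) else 0)
        = if i = n then ((n+1).factorial:ℝ) else 0 := by intro i; simp
    simp only [h]
    rw [collapse _ n (by omega) f _, Nat.succ_sub_one, Nat.factorial_succ]
    push_cast; ring

/-- The Lie derivative of `(y-c)^m` along `X(y)=y³`, written as a polynomial in `(y-c)`. -/
private lemma lieDeriv_pow_shift (lam c : ℝ) (m : ℕ) :
    lieDeriv lam (fun y => y^3) (fun y : ℝ => (y - c)^m)
      = fun y : ℝ => ((m:ℝ) + 3*lam) * (y - c)^(m+2)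
          + ((3*(m:ℝ) + 6*lam) * c) * (y - c)^(m+1)
          + ((3*(m:ℝ) + 3*lam) * c^2) * (y - c)^m
          + ((m:ℝ) * c^3) * (y - c)^(m-1) := by
  funext y
  simp only [lieDeriv]
  rw [(hasDerivAt_pow_shift c m y).deriv]
  have h2 : deriv (fun z : ℝ => z^3) y = 3*y^2 := by
    simp [deriv_pow]
  rw [h2]
  rcases m with _|n
  · push_cast
    ring
  · simp only [Nat.succ_sub_one]
    push_cast
    ring

/-- The coefficients of the Lie derivative `𝓛_X^{λ,μ}(A)` along the vector field
`X(x) = x³` are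
`b_i(x) = x³·a_i'(x) + 3(μ−λ−i)·x²·a_i(x) − 3(i+1)(i+2λ)·x·a_{i+1}(x) − (i+1)(i+2)(i+3λ)·a_{i+2}(x)`. -/
theorem cubic_field_action (lam μ : ℝ) (k : ℕ) (a b : ℕ → ℝ → ℝ)
    (ha : ∀ i, ContDiff ℝ (⊤ : ℕ∞) (a i)) (ha1 : a (k+1) = 0) (ha2 : a (k+2) = 0)
    (hbsmooth : ∀ i, ContDiff ℝ (⊤ : ℕ∞) (b i))
    (hb : ∀ φ : ℝ → ℝ, ContDiff ℝ (⊤ : ℕ∞) φ →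
      (fun x => ∑ i ∈ Finset.range (k+1), b i x * iteratedDeriv i φ x)
        = fun x =>
            lieDeriv μ (fun y => y^3)
              (fun y => ∑ i ∈ Finset.range (k+1), a i y * iteratedDeriv i φ y) x
              - ∑ i ∈ Finset.range (k+1),
                  a i x * iteratedDeriv i (lieDeriv lam (fun y => y^3) φ) x) :
    ∀ i, i ≤ k → ∀ x : ℝ,
      b i x = x^3 * deriv (a i) x + 3 * (μ - lam - (i : ℝ)) * x^2 * a i x
        - 3 * ((i : ℝ) + 1) * ((i : ℝ) + 2 * lam) * x * a (i+1) x
        - ((i : ℝ) + 1) * ((i : ℝ) + 2) * ((i : ℝ) + 3 * lam) * a (i+2) x := by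
  intro m hm x₀
  have hφ : ContDiff ℝ (⊤ : ℕ∞) (fun y : ℝ => (y - x₀)^m) :=
    (contDiff_id.sub contDiff_const).pow m
  have H := congrFun (hb (fun y => (y - x₀)^m) hφ) x₀
  simp only [lieDeriv] at H
  -- differentiability of the iterated derivatives of φ
  have hdg : ∀ i, Differentiable ℝ (iteratedDeriv i (fun y : ℝ => (y - x₀)^m)) := by
    intro i
    rw [iter_pow]
    exact ((differentiable_id.sub (differentiable_const _)).pow _).const_mul _
  -- collapse of the b-sum
  have e1 : ∑ i ∈ Finset.range (k+1), b i x₀ * iteratedDeriv i (fun y : ℝ => (y - x₀)^m) x₀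
      = b m x₀ * (m.factorial : ℝ) := by
    simp only [iter_pow_at]
    exact collapse _ m (by omega) (fun i => b i x₀) _
  -- collapse of the a-sum at x₀
  have hAx : ∑ i ∈ Finset.range (k+1), a i x₀ * iteratedDeriv i (fun y : ℝ => (y - x₀)^m) x₀
      = a m x₀ * (m.factorial : ℝ) := by
    simp only [iter_pow_at]
    exact collapse _ m (by omega) (fun i => a i x₀) _
  -- derivative of the a-sum at x₀
  have hA : deriv (fun y => ∑ i ∈ Finset.range (k+1),
        a i y * iteratedDeriv i (fun y : ℝ => (y - x₀)^m) y) x₀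
      = deriv (a m) x₀ * (m.factorial : ℝ)
        + (m:ℝ) * ((m-1).factorial : ℝ) * a (m-1) x₀ := by
    rw [deriv_fun_sum (fun i _ =>
      (((ha i).differentiable (by simp) x₀)).fun_mul ((hdg i) x₀))]
    have hterm : ∀ i ∈ Finset.range (k+1),
        deriv (fun y => a i y * iteratedDeriv i (fun y : ℝ => (y - x₀)^m) y) x₀
          = deriv (a i) x₀ * (if i = m then (m.factorial : ℝ) else 0)
            + a i x₀ * (if i+1 = m then (m.factorial : ℝ) else 0) := by
      intro i _
      rw [deriv_fun_mul ((ha i).differentiable (by simp) x₀) ((hdg i) x₀)]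
      rw [show deriv (iteratedDeriv i (fun y : ℝ => (y - x₀)^m)) x₀
            = iteratedDeriv (i+1) (fun y : ℝ => (y - x₀)^m) x₀ from
          (congrFun iteratedDeriv_succ x₀).symm]
      rw [iter_pow_at, iter_pow_at]
    rw [Finset.sum_congr rfl hterm, Finset.sum_add_distrib,
      collapse _ m (by omega) (fun i => deriv (a i) x₀) _,
      collapse_shift k m (by omega) (fun i => a i x₀)]
  -- the subtracted sum
  have hS : ∑ i ∈ Finset.range (k+1),
        a i x₀ * iteratedDeriv i (lieDeriv lam (fun y => y^3) (fun y : ℝ => (y - x₀)^m)) x₀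
      = ((m:ℝ) + 3*lam) * ((m+2).factorial : ℝ) * a (m+2) x₀
        + ((3*(m:ℝ) + 6*lam) * x₀) * ((m+1).factorial : ℝ) * a (m+1) x₀
        + ((3*(m:ℝ) + 3*lam) * x₀^2) * (m.factorial : ℝ) * a m x₀
        + ((m:ℝ) * x₀^3) * ((m-1).factorial : ℝ) * a (m-1) x₀ := by
    have h1 : a (k+1) x₀ = 0 := by rw [ha1]; rfl
    have h2 : a (k+2) x₀ = 0 := by rw [ha2]; rfl
    have hext : ∑ i ∈ Finset.range (k+1),
          a i x₀ * iteratedDeriv i (lieDeriv lam (fun y => y^3) (fun y : ℝ => (y - x₀)^m)) x₀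
        = ∑ i ∈ Finset.range (k+3),
          a i x₀ * iteratedDeriv i (lieDeriv lam (fun y => y^3) (fun y : ℝ => (y - x₀)^m)) x₀ := by
      have s1 := Finset.sum_range_succ
        (fun i => a i x₀ * iteratedDeriv i
          (lieDeriv lam (fun y => y^3) (fun y : ℝ => (y - x₀)^m)) x₀) (k+2)
      have s2 := Finset.sum_range_succ
        (fun i => a i x₀ * iteratedDeriv i
          (lieDeriv lam (fun y => y^3) (fun y : ℝ => (y - x₀)^m)) x₀) (k+1)
      rw [show k+3 = (k+2)+1 from rfl, s1, s2, h1, h2]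
      ring
    rw [hext, lieDeriv_pow_shift]
    simp only [iter_comb_at, mul_add, Finset.sum_add_distrib]
    rw [show (∑ i ∈ Finset.range (k+3),
          a i x₀ * (((m:ℝ) + 3*lam) * (if i = m+2 then ((m+2).factorial : ℝ) else 0)))
        = ∑ i ∈ Finset.range (k+3),
          a i x₀ * (if i = m+2 then ((m:ℝ) + 3*lam) * ((m+2).factorial : ℝ) else 0) from
        Finset.sum_congr rfl (fun i _ => by rw [mul_ite, mul_zero]),
      collapse _ (m+2) (by omega) (fun i => a i x₀) _]
    rw [show (∑ i ∈ Finset.range (k+3),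
          a i x₀ * (((3*(m:ℝ) + 6*lam) * x₀) * (if i = m+1 then ((m+1).factorial : ℝ) else 0)))
        = ∑ i ∈ Finset.range (k+3),
          a i x₀ * (if i = m+1 then ((3*(m:ℝ) + 6*lam) * x₀) * ((m+1).factorial : ℝ) else 0) from
        Finset.sum_congr rfl (fun i _ => by rw [mul_ite, mul_zero]),
      collapse _ (m+1) (by omega) (fun i => a i x₀) _]
    rw [show (∑ i ∈ Finset.range (k+3),
          a i x₀ * (((3*(m:ℝ) + 3*lam) * x₀^2) * (if i = m then (m.factorial : ℝ) else 0)))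
        = ∑ i ∈ Finset.range (k+3),
          a i x₀ * (if i = m then ((3*(m:ℝ) + 3*lam) * x₀^2) * (m.factorial : ℝ) else 0) from
        Finset.sum_congr rfl (fun i _ => by rw [mul_ite, mul_zero]),
      collapse _ m (by omega) (fun i => a i x₀) _]
    rw [show (∑ i ∈ Finset.range (k+3),
          a i x₀ * (((m:ℝ) * x₀^3) * (if i = m-1 then ((m-1).factorial : ℝ) else 0)))
        = ∑ i ∈ Finset.range (k+3),
          a i x₀ * (if i = m-1 then ((m:ℝ) * x₀^3) * ((m-1).factorial : ℝ) else 0) from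
        Finset.sum_congr rfl (fun i _ => by rw [mul_ite, mul_zero]),
      collapse _ (m-1) (by omega) (fun i => a i x₀) _]
    ring
  have hd3 : deriv (fun y : ℝ => y^3) x₀ = 3*x₀^2 := by
    simp [deriv_pow]
  rw [e1, hd3, hA, hAx, hS] at H
  have hfac : (m.factorial : ℝ) ≠ 0 := by
    exact_mod_cast m.factorial_ne_zero
  apply mul_right_cancel₀ hfac
  rw [H]
  have hf1 : ((m+1).factorial : ℝ) = ((m:ℝ)+1) * (m.factorial : ℝ) := by
    rw [Nat.factorial_succ]; push_cast; ring
  have hf2 : ((m+2).factorial : ℝ) = ((m:ℝ)+2) * ((m:ℝ)+1) * (m.factorial : ℝ) := by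
    rw [show m+2 = (m+1)+1 from rfl, Nat.factorial_succ, Nat.factorial_succ]; push_cast; ring
  rw [hf1, hf2]
  ring
end
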